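/- arXiv:1810.07107 — 2 statements merged into one kernel-verified Lean document; each statement's English description precedes it below -/
import Mathlib

section
/- If f is an orientation-preserving circle homeomorphism with irrational rotation number, and h, h̃ are two orientation-preserving homeomorphisms of T both satisfying h∘f = T_{ρ(f)}∘h and h̃∘f = T_{ρ(f)}∘h̃, then there exists β ∈ T such that h̃ = T_β∘h. -/
open Filter Topology

/-- `ρ` is the rotation (translation) number of the lift `F`. -/
def IsRotNumber (F : ℝ → ℝ) (ρ : ℝ) : Prop :=
  ∀ x : ℝ, Tendsto (fun n : ℕ => (F^[n] x - x) / (n : ℝ)) atTop (𝓝 ρ)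

/-- A lift of an orientation-preserving homeomorphism of the circle `ℝ/ℤ`. -/
structure CircleHomeoLift where
  toFun : ℝ → ℝ
  continuous_toFun : Continuous toFun
  strictMono_toFun : StrictMono toFun
  map_add_one : ∀ x, toFun (x + 1) = toFun x + 1

/-!
With `H⁻¹` the inverse lift, `ψ y = H̃ (H⁻¹ y) - y` is continuous and, since both `H`
and `H̃` conjugate the lift of `f` to translation by `ρ`, it has the periods `1` and `ρ`. The group
`ℤ + ℤρ` of these periods is dense in `ℝ` because `ρ` is irrational, so `ψ` is a constant `β`, and
then `H̃ = H + β`.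
-/

theorem Continuous.eq_of_periodic_of_irrational {α : Type*} [TopologicalSpace α] [T2Space α]
    {ψ : ℝ → α} {a b : ℝ} (hψ : Continuous ψ) (ha : Function.Periodic ψ a)
    (hb : Function.Periodic ψ b) (hab : Irrational (a / b)) (x y : ℝ) : ψ x = ψ y := by
  have hdense : Dense (AddSubgroup.closure {a, b} : Set ℝ) :=
    dense_addSubgroupClosure_pair_iff.2 hab
  have hperiod : ∀ t ∈ AddSubgroup.closure {a, b}, ψ (x + t) = ψ x := by
    intro t ht
    obtain ⟨m, n, rfl⟩ := AddSubgroup.mem_closure_pair.1 ht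
    exact (ha.zsmul m).add_period (hb.zsmul n) x
  have hconst : (fun t => ψ (x + t)) = fun _ => ψ x :=
    Continuous.ext_on hdense (hψ.comp (continuous_const_add x)) continuous_const hperiod
  simpa using (congrFun hconst (y - x)).symm

namespace CircleHomeoLift

variable (g : CircleHomeoLift)

theorem map_add_int (x : ℝ) (n : ℤ) : g.toFun (x + n) = g.toFun x + n := by
  have hper : Function.Periodic (fun x => g.toFun x - x) 1 := fun x => by
    simp only [g.map_add_one]; ring
  have := hper.int_mul n x
  simp only [mul_one] at this
  linarith

theorem add_map_zero_sub_one_le (x : ℝ) : x + g.toFun 0 - 1 ≤ g.toFun x :=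
  calc x + g.toFun 0 - 1 ≤ g.toFun 0 + ⌊x⌋ := by linarith [Int.sub_one_lt_floor x]
    _ = g.toFun (0 + ⌊x⌋) := (g.map_add_int 0 _).symm
    _ ≤ g.toFun x := g.strictMono_toFun.monotone (by simpa using Int.floor_le x)

theorem map_le_add_map_zero_add_one (x : ℝ) : g.toFun x ≤ x + g.toFun 0 + 1 :=
  calc g.toFun x ≤ g.toFun (0 + ⌈x⌉) := g.strictMono_toFun.monotone (by simpa using Int.le_ceil x)
    _ = g.toFun 0 + ⌈x⌉ := g.map_add_int 0 _
    _ ≤ x + g.toFun 0 + 1 := by linarith [Int.ceil_lt_add_one x]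

theorem surjective : Function.Surjective g.toFun :=
  g.continuous_toFun.surjective
    (tendsto_atTop_mono g.add_map_zero_sub_one_le
      (tendsto_atTop_add_const_right _ _ (tendsto_atTop_add_const_right _ _ tendsto_id)))
    (tendsto_atBot_mono g.map_le_add_map_zero_add_one
      (tendsto_atBot_add_const_right _ _ (tendsto_atBot_add_const_right _ _ tendsto_id)))

noncomputable def toOrderIso : ℝ ≃o ℝ :=
  StrictMono.orderIsoOfSurjective g.toFun g.strictMono_toFun g.surjective

@[simp]
theorem toOrderIso_apply (x : ℝ) : g.toOrderIso x = g.toFun x := rfl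

noncomputable def symm : CircleHomeoLift where
  toFun := g.toOrderIso.symm
  continuous_toFun := g.toOrderIso.symm.continuous
  strictMono_toFun := g.toOrderIso.symm.strictMono
  map_add_one x := g.toOrderIso.injective <| by
    rw [OrderIso.apply_symm_apply, toOrderIso_apply, g.map_add_one, ← toOrderIso_apply,
      OrderIso.apply_symm_apply]

@[simp]
theorem apply_symm_apply (y : ℝ) : g.toFun (g.symm.toFun y) = y :=
  g.toOrderIso.apply_symm_apply y

@[simp]
theorem symm_apply_apply (x : ℝ) : g.symm.toFun (g.toFun x) = x :=
  g.toOrderIso.symm_apply_apply x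

theorem periodic_comp_symm_sub_of_semiconj {F : ℝ → ℝ} {c : ℝ} (h h' : CircleHomeoLift)
    (hF : ∀ x, h.toFun (F x) = h.toFun x + c) (hF' : ∀ x, h'.toFun (F x) = h'.toFun x + c) :
    Function.Periodic (fun y => h'.toFun (h.symm.toFun y) - y) c := by
  intro y
  have hsymm : h.symm.toFun (y + c) = F (h.symm.toFun y) := by
    conv_lhs => rw [← h.apply_symm_apply y, ← hF, symm_apply_apply]
  simp only [hsymm, hF']
  ring

end CircleHomeoLift

theorem conjugacy_unique_up_to_rotation_general (f : CircleHomeoLift) (ρ : ℝ)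
    (hirr : Irrational ρ)
    (h htilde : CircleHomeoLift)
    (hconj : ∀ x, h.toFun (f.toFun x) = h.toFun x + ρ)
    (hconj' : ∀ x, htilde.toFun (f.toFun x) = htilde.toFun x + ρ) :
    ∃ β : ℝ, ∀ x, htilde.toFun x = h.toFun x + β := by
  set ψ : ℝ → ℝ := fun y => htilde.toFun (h.symm.toFun y) - y
  have hψ : Continuous ψ :=
    (htilde.continuous_toFun.comp h.symm.continuous_toFun).sub continuous_id
  have hperiod_one : Function.Periodic ψ 1 :=
    CircleHomeoLift.periodic_comp_symm_sub_of_semiconj h htilde h.map_add_one htilde.map_add_one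
  have hperiod_rho : Function.Periodic ψ ρ :=
    CircleHomeoLift.periodic_comp_symm_sub_of_semiconj h htilde hconj hconj'
  refine ⟨ψ 0, fun x => ?_⟩
  have := hψ.eq_of_periodic_of_irrational hperiod_rho hperiod_one (by simpa using hirr)
    (h.toFun x) 0
  simp only [ψ, CircleHomeoLift.symm_apply_apply] at this
  linarith

/-- **Uniqueness of the conjugacy up to rotation.** If `f` is an orientation-preserving circle
homeomorphism with irrational rotation number `ρ` and `h`, `h̃` are two orientation-preserving
circle homeomorphisms conjugating `f` to the rotation by `ρ`, then `h̃ = T_β ∘ h` for some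
`β`, i.e. on lifts `H̃ = H + β`. -/
theorem conjugacy_unique_up_to_rotation (f : CircleHomeoLift) (ρ : ℝ)
    (hρ : IsRotNumber f.toFun ρ) (hirr : Irrational ρ)
    (h htilde : CircleHomeoLift)
    (hconj : ∀ x, h.toFun (f.toFun x) = h.toFun x + ρ)
    (hconj' : ∀ x, htilde.toFun (f.toFun x) = htilde.toFun x + ρ) :
    ∃ β : ℝ, ∀ x, htilde.toFun x = h.toFun x + β :=
  conjugacy_unique_up_to_rotation_general f ρ hirr h htilde hconj hconj'
end

section
/- If f is an orientation-preserving homeomorphism of the circle T = R/Z, f̄ is a lift of f to R, and μ is an f-invariant Borel probability measure on T, then ρ(f̄) = ∫_T (f̄(x) − x) dμ(x), where ρ(f̄) = lim_{n→∞} (f̄ⁿ(x) − x)/n is the rotation number of the lift. -/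
open Filter Topology MeasureTheory

/-!
The Birkhoff sums of the displacement `φ` along `f` telescope: at the image of `x`, the `n`-th sum
is `F̄ⁿ(x) - x`. Hence the Birkhoff averages of `φ` converge to `ρ` at every point of the circle,
while by invariance of `μ` each of them has integral `∫ φ dμ`. Since `φ` is continuous on a compact
space, the averages are uniformly bounded, and dominated convergence gives `ρ = ∫ φ dμ`.
-/

theorem norm_birkhoffAverage_le {α E : Type*} [SeminormedAddCommGroup E] [NormedSpace ℝ E]
    {f : α → α} {g : α → E} {C : ℝ} (hC : ∀ x, ‖g x‖ ≤ C) (n : ℕ) (x : α) :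
    ‖birkhoffAverage ℝ f g n x‖ ≤ C := by
  rcases Nat.eq_zero_or_pos n with rfl | hn
  · simpa using (norm_nonneg _).trans (hC x)
  have hsum : ‖birkhoffSum f g n x‖ ≤ n * C := by
    simpa [birkhoffSum] using norm_sum_le_of_le (Finset.range n) fun k _ => hC (f^[k] x)
  have hn' : (0 : ℝ) < n := by exact_mod_cast hn
  calc ‖birkhoffAverage ℝ f g n x‖ = (n : ℝ)⁻¹ * ‖birkhoffSum f g n x‖ := by
        rw [birkhoffAverage, norm_smul, norm_inv, RCLike.norm_natCast]
    _ ≤ (n : ℝ)⁻¹ * (n * C) := by gcongr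
    _ = C := by field_simp

theorem birkhoffSum_apply_eq_iterate_sub {α G : Type*} [AddCommGroup G] {f : α → α}
    {π : G → α} {F : G → G} {φ : α → G} (hπ : Function.Semiconj π F f)
    (hφ : ∀ x, φ (π x) = F x - x) (n : ℕ) (x : G) :
    birkhoffSum f φ n (π x) = F^[n] x - x := by
  have step : ∀ k, φ (f^[k] (π x)) = F^[k + 1] x - F^[k] x := fun k => by
    rw [← hπ.iterate_right k x, hφ, Function.iterate_succ_apply']
  simp only [birkhoffSum, step]
  exact Finset.sum_range_sub (F^[·] x) n

namespace MeasureTheory.MeasurePreserving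

variable {α E : Type*} [MeasurableSpace α] {μ : Measure α} {f : α → α}
  [NormedAddCommGroup E] [NormedSpace ℝ E] {g : α → E}

theorem integral_comp_iterate (hf : MeasurePreserving f μ μ) (hg : AEStronglyMeasurable g μ)
    (k : ℕ) : ∫ x, g (f^[k] x) ∂μ = ∫ x, g x ∂μ := by
  have hfk := hf.iterate k
  rw [← integral_map hfk.measurable.aemeasurable (by rwa [hfk.map_eq]), hfk.map_eq]

theorem integral_birkhoffSum (hf : MeasurePreserving f μ μ) (hg : Integrable g μ) (n : ℕ) :
    ∫ x, birkhoffSum f g n x ∂μ = n • ∫ x, g x ∂μ := by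
  simp only [birkhoffSum]
  rw [integral_finsetSum (f := fun k x => g (f^[k] x)) _ fun k _ => (hf.iterate k).integrable_comp_of_integrable hg]
  simp [hf.integral_comp_iterate hg.aestronglyMeasurable]

theorem integral_birkhoffAverage (hf : MeasurePreserving f μ μ) (hg : Integrable g μ) {n : ℕ}
    (hn : n ≠ 0) : ∫ x, birkhoffAverage ℝ f g n x ∂μ = ∫ x, g x ∂μ := by
  have hn' : (n : ℝ) ≠ 0 := by exact_mod_cast hn
  simp only [birkhoffAverage]
  rw [integral_smul, hf.integral_birkhoffSum hg, ← Nat.cast_smul_eq_nsmul ℝ, smul_smul,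
    inv_mul_cancel₀ hn', one_smul]

theorem aestronglyMeasurable_birkhoffAverage (hf : MeasurePreserving f μ μ)
    (hg : AEStronglyMeasurable g μ) (n : ℕ) :
    AEStronglyMeasurable (birkhoffAverage ℝ f g n) μ := by
  have hsum : AEStronglyMeasurable (birkhoffSum f g n) μ :=
    Finset.aestronglyMeasurable_fun_sum (Finset.range n) fun k _ =>
      hg.comp_measurePreserving (hf.iterate k)
  exact hsum.const_smul _

theorem integral_eq_of_tendsto_birkhoffAverage [IsFiniteMeasure μ] (hf : MeasurePreserving f μ μ)
    (hg : AEStronglyMeasurable g μ) {C : ℝ} (hC : ∀ x, ‖g x‖ ≤ C) {h : α → E}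
    (hlim : ∀ᵐ x ∂μ, Tendsto (birkhoffAverage ℝ f g · x) atTop (𝓝 (h x))) :
    ∫ x, h x ∂μ = ∫ x, g x ∂μ := by
  have hconv := tendsto_integral_of_dominated_convergence (fun _ => C)
    (hf.aestronglyMeasurable_birkhoffAverage hg) (integrable_const C)
    (fun n => ae_of_all _ (norm_birkhoffAverage_le hC n)) hlim
  have hint : Integrable g μ := .of_bound hg C (ae_of_all _ hC)
  have hconst : Tendsto (fun n => ∫ x, birkhoffAverage ℝ f g n x ∂μ) atTop (𝓝 (∫ x, g x ∂μ)) :=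
    tendsto_const_nhds.congr'
      ((eventually_ne_atTop 0).mono fun _ hn => (hf.integral_birkhoffAverage hint hn).symm)
  exact tendsto_nhds_unique hconv hconst

end MeasureTheory.MeasurePreserving

/-- The rotation number of a lift `F̄` of an orientation-preserving circle homeomorphism `f`
equals `∫_𝕋 (F̄(x) − x) dμ(x)` for any `f`-invariant Borel probability measure `μ` on the
circle `𝕋 = ℝ/ℤ`. Here `φ : 𝕋 → ℝ` is the function induced by the `1`-periodic
displacement `x ↦ F̄(x) − x`. -/
theorem rotation_number_eq_integral_of_invariant_measure
    (f : AddCircle (1 : ℝ) → AddCircle (1 : ℝ)) (F : CircleHomeoLift)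
    (hlift : ∀ x : ℝ, f (x : AddCircle (1 : ℝ)) = (F.toFun x : AddCircle (1 : ℝ)))
    (μ : Measure (AddCircle (1 : ℝ))) [IsProbabilityMeasure μ]
    (hinv : MeasurePreserving f μ μ)
    (φ : AddCircle (1 : ℝ) → ℝ)
    (hφ : ∀ x : ℝ, φ (x : AddCircle (1 : ℝ)) = F.toFun x - x)
    (ρ : ℝ) (hρ : IsRotNumber F.toFun ρ) :
    ρ = ∫ z, φ z ∂μ := by
  have hφc : Continuous φ := (QuotientAddGroup.isQuotientMap_mk _).continuous_iff.2 <|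
    (F.continuous_toFun.sub continuous_id).congr fun x => (hφ x).symm
  obtain ⟨C, hC⟩ := isCompact_univ.exists_bound_of_continuousOn hφc.continuousOn
  have hsemi : Function.Semiconj ((↑) : ℝ → AddCircle (1 : ℝ)) F.toFun f := fun x => (hlift x).symm
  have hlim : ∀ z, Tendsto (birkhoffAverage ℝ f φ · z) atTop (𝓝 ρ) := by
    intro z
    obtain ⟨x, rfl⟩ := QuotientAddGroup.mk_surjective z
    simpa only [birkhoffAverage, birkhoffSum_apply_eq_iterate_sub hsemi hφ, smul_eq_mul,
      inv_mul_eq_div] using hρ x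
  simpa using hinv.integral_eq_of_tendsto_birkhoffAverage hφc.aestronglyMeasurable
    (fun z => hC z trivial) (ae_of_all _ hlim)
end
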